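/- arXiv:1007.3701 — 11 statements merged into one kernel-verified Lean document; each statement's English description precedes it below -/
import Mathlib

section
/- A right R-module M is noetherian if and only if every essential submodule of M is finitely generated. -/
/-! Choose by Zorn's lemma a submodule `C` maximal with `N ∩ C = 0`; modularity makes `N ⊕ C`
essential, so it is finitely generated, and then so is `N`, which embeds into
`(N ⊕ C) / C` via `M → M / C`. -/

theorem exists_disjoint_forall_disjoint_sup_eq_bot {α : Type*} [CompleteLattice α]
    [IsModularLattice α] [IsCompactlyGenerated α] (a : α) :
    ∃ b, Disjoint a b ∧ ∀ c, Disjoint (a ⊔ b) c → c = ⊥ := by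
  obtain ⟨b, -, hab, hmax⟩ := zorn_le_nonempty₀ {b | Disjoint a b}
    (fun s hs hchain _ _ => ⟨sSup s,
      hchain.directedOn.disjoint_sSup_right.2 fun _ hb => hs hb, fun _ => le_sSup⟩)
    ⊥ disjoint_bot_right
  refine ⟨b, hab, fun c hc => ?_⟩
  have hcb : c ≤ b :=
    le_sup_right.trans (hmax (hab.disjoint_sup_right_of_disjoint_sup_left hc) le_sup_left)
  exact hc.eq_bot_of_ge (hcb.trans le_sup_right)

theorem Submodule.fg_of_disjoint_of_fg_sup {R M : Type*} [Ring R] [AddCommGroup M]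
    [Module R M] {N C : Submodule R M} (hdisj : Disjoint N C) (hfg : (N ⊔ C).FG) : N.FG := by
  refine fg_of_fg_map_of_fg_inf_ker C.mkQ ?_ ?_
  · simpa [map_sup] using hfg.map C.mkQ
  · simpa [hdisj.eq_bot] using fg_bot

/-- A right `R`-module `M` (modelled as a module over `Rᵐᵒᵖ`) is noetherian
iff every essential submodule of `M` is finitely generated. -/
theorem stmt3 (R : Type*) [Ring R] (M : Type*) [AddCommGroup M] [Module Rᵐᵒᵖ M] :
    IsNoetherian Rᵐᵒᵖ M ↔
      ∀ N : Submodule Rᵐᵒᵖ M,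
        (∀ L : Submodule Rᵐᵒᵖ M, L ≠ ⊥ → N ⊓ L ≠ ⊥) → N.FG := by
  refine ⟨fun _ N _ => IsNoetherian.noetherian N, fun h => isNoetherian_def.2 fun N => ?_⟩
  obtain ⟨C, hdisj, hess⟩ := exists_disjoint_forall_disjoint_sup_eq_bot N
  have hess' : ∀ L : Submodule Rᵐᵒᵖ M, L ≠ ⊥ → (N ⊔ C) ⊓ L ≠ ⊥ :=
    fun L hL hinf => hL (hess L (disjoint_iff.2 hinf))
  exact Submodule.fg_of_disjoint_of_fg_sup hdisj (h _ hess')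
end

section
/- Let R be a ring and let I, J be right ideals of R such that J = xR is principal and R/I ≅ R/J as right R-modules. Then I can be generated by at most two elements. -/
/-!
An isomorphism `φ : R/I ≅ R/J` of cyclic right modules is determined by `φ 1 = u` and
`φ⁻¹ 1 = v`: it forces `I = {r | u r ∈ J}` and `u v ≡ 1 mod J`. With `J = xR` write
`u v = 1 + x c`; then `r ∈ I` means `u r = x s` for some `s`, and
`r = v x s + (1 - v u) r` exhibits `I` as generated by `v x` and `1 - v u`.
-/

section

open MulOpposite Submodule

variable {R : Type*} [Ring R]

theorem Submodule.Quotient.map_mk_eq_mk_mul {I J : Submodule Rᵐᵒᵖ R} {F : Type*}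
    [FunLike F (R ⧸ I) (R ⧸ J)] [LinearMapClass F Rᵐᵒᵖ (R ⧸ I) (R ⧸ J)] (f : F) {u : R}
    (hu : f (Submodule.Quotient.mk 1) = Submodule.Quotient.mk u) (r : R) :
    f (Submodule.Quotient.mk r) = Submodule.Quotient.mk (u * r) := by
  have hr : (Submodule.Quotient.mk r : R ⧸ I) = op r • Submodule.Quotient.mk 1 := by
    rw [← Submodule.Quotient.mk_smul, op_smul_eq_mul, one_mul]
  rw [hr, map_smul, hu]
  rfl

theorem eq_comap_mulLeft_of_linearEquiv {I J : Submodule Rᵐᵒᵖ R}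
    (φ : (R ⧸ I) ≃ₗ[Rᵐᵒᵖ] (R ⧸ J)) {u : R}
    (hu : φ (Submodule.Quotient.mk 1) = Submodule.Quotient.mk u) :
    I = J.comap (DistribSMul.toLinearMap Rᵐᵒᵖ R u) := by
  ext r
  rw [mem_comap, ← Submodule.Quotient.mk_eq_zero, ← φ.map_eq_zero_iff,
    Submodule.Quotient.map_mk_eq_mk_mul φ hu, Submodule.Quotient.mk_eq_zero]
  rfl

theorem mul_sub_one_mem_of_linearEquiv {I J : Submodule Rᵐᵒᵖ R}
    (φ : (R ⧸ I) ≃ₗ[Rᵐᵒᵖ] (R ⧸ J)) {u v : R}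
    (hu : φ (Submodule.Quotient.mk 1) = Submodule.Quotient.mk u)
    (hv : φ (Submodule.Quotient.mk v) = Submodule.Quotient.mk 1) : u * v - 1 ∈ J := by
  rwa [Submodule.Quotient.map_mk_eq_mk_mul φ hu, Submodule.Quotient.eq] at hv

theorem comap_mulLeft_span_singleton {x u v c : R} (h : u * v = 1 + x * c) :
    (span Rᵐᵒᵖ {x}).comap (DistribSMul.toLinearMap Rᵐᵒᵖ R u) =
      span Rᵐᵒᵖ {v * x, 1 - v * u} := by
  apply le_antisymm
  · intro r hr
    obtain ⟨s, hs⟩ := mem_span_singleton.1 (mem_comap.1 hr)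
    change x * s.unop = u * r at hs
    rw [mem_span_pair]
    refine ⟨s, op r, ?_⟩
    change v * x * s.unop + (1 - v * u) * r = r
    rw [mul_assoc, hs]
    noncomm_ring
  · rw [span_le]
    rintro y (rfl | rfl) <;> rw [SetLike.mem_coe, mem_comap, mem_span_singleton]
    · refine ⟨op (1 + c * x), ?_⟩
      change x * (1 + c * x) = u * (v * x)
      rw [← mul_assoc, h]
      noncomm_ring
    · refine ⟨op (-(c * u)), ?_⟩
      change x * -(c * u) = u * (1 - v * u)
      rw [mul_sub, ← mul_assoc, h]
      noncomm_ring

end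

/-- If `I`, `J` are right ideals of a ring `R` (submodules of `R` over `Rᵐᵒᵖ`),
`J = xR` is principal, and `R/I ≅ R/J` as right `R`-modules, then `I` is
generated by at most two elements. -/
theorem stmt4 (R : Type*) [Ring R] (I J : Submodule Rᵐᵒᵖ R) (x : R)
    (hJ : J = Submodule.span Rᵐᵒᵖ ({x} : Set R))
    (hiso : Nonempty ((R ⧸ I) ≃ₗ[Rᵐᵒᵖ] (R ⧸ J))) :
    ∃ a b : R, I = Submodule.span Rᵐᵒᵖ ({a, b} : Set R) := by
  obtain ⟨φ⟩ := hiso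
  obtain ⟨u, hu⟩ := Submodule.Quotient.mk_surjective J (φ (Submodule.Quotient.mk 1))
  obtain ⟨v, hv⟩ := Submodule.Quotient.mk_surjective I (φ.symm (Submodule.Quotient.mk 1))
  have huv : u * v - 1 ∈ Submodule.span Rᵐᵒᵖ {x} :=
    hJ ▸ mul_sub_one_mem_of_linearEquiv φ hu.symm (by rw [hv, φ.apply_symm_apply])
  obtain ⟨c, hc⟩ := Submodule.mem_span_singleton.1 huv
  refine ⟨v * x, 1 - v * u, ?_⟩
  rw [eq_comap_mulLeft_of_linearEquiv φ hu.symm, hJ]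
  exact comap_mulLeft_span_singleton (c := c.unop) (eq_add_of_sub_eq' hc.symm)
end

section
/- Let R be a ring and I, J right ideals with R/I ≅ R/J as right R-modules. If J can be generated by n elements, then I can be generated by at most n+1 elements. -/
/-!
An isomorphism `R ⧸ I ≃ R ⧸ J` of cyclic right modules is given by left multiplication by some
`u` with inverse left multiplication by some `v`. Hence `u I ⊆ J`, `v J ⊆ I` and `1 - v u ∈ I`,
and every `a ∈ I` splits as `a = (1 - v u) a + v (u a)`. So `I` is generated by `1 - v u`
together with `v` times the `n` generators of `J`.
-/

open MulOpposite

namespace Submodule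

variable {R : Type*} [Ring R] {I J : Submodule Rᵐᵒᵖ R}

theorem Quotient.mk_eq_op_smul_mk_one (I : Submodule Rᵐᵒᵖ R) (r : R) :
    (Quotient.mk r : R ⧸ I) = op r • Quotient.mk 1 := by
  rw [← Quotient.mk_smul, op_smul_eq_mul, one_mul]

theorem Quotient.map_mk_eq_mk_mul_s5 (φ : (R ⧸ I) →ₗ[Rᵐᵒᵖ] (R ⧸ J)) {u : R}
    (hu : φ (Quotient.mk 1) = Quotient.mk u) (r : R) :
    φ (Quotient.mk r) = Quotient.mk (u * r) := by
  rw [Quotient.mk_eq_op_smul_mk_one, map_smul, hu, ← Quotient.mk_smul, op_smul_eq_mul]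

theorem Quotient.mul_mem_of_map_mk_one (φ : (R ⧸ I) →ₗ[Rᵐᵒᵖ] (R ⧸ J)) {u : R}
    (hu : φ (Quotient.mk 1) = Quotient.mk u) {a : R} (ha : a ∈ I) : u * a ∈ J := by
  rw [← Quotient.mk_eq_zero, ← Quotient.map_mk_eq_mk_mul_s5 φ hu, (Quotient.mk_eq_zero I).mpr ha,
    map_zero]

theorem exists_mul_mem_of_quotient_equiv (φ : (R ⧸ I) ≃ₗ[Rᵐᵒᵖ] (R ⧸ J)) :
    ∃ u v : R, 1 - v * u ∈ I ∧ (∀ a ∈ I, u * a ∈ J) ∧ ∀ b ∈ J, v * b ∈ I := by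
  obtain ⟨u, hu⟩ := Quotient.mk_surjective J (φ (Quotient.mk 1))
  obtain ⟨v, hv⟩ := Quotient.mk_surjective I (φ.symm (Quotient.mk 1))
  have hvu : (Quotient.mk (v * u) : R ⧸ I) = Quotient.mk 1 := by
    rw [← Quotient.map_mk_eq_mk_mul_s5 φ.symm.toLinearMap hv.symm]
    simp [hu]
  refine ⟨u, v, ?_, fun a ↦ Quotient.mul_mem_of_map_mk_one φ.toLinearMap hu.symm,
    fun b ↦ Quotient.mul_mem_of_map_mk_one φ.symm.toLinearMap hv.symm⟩
  rw [← Quotient.mk_eq_zero, Quotient.mk_sub, hvu, sub_self]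

theorem eq_span_one_sub_mul_sup_map_mulLeft {u v : R} (hvu : 1 - v * u ∈ I)
    (hu : ∀ a ∈ I, u * a ∈ J) (hv : ∀ b ∈ J, v * b ∈ I) :
    I = Rᵐᵒᵖ ∙ (1 - v * u) ⊔ J.map (LinearMap.mulLeft Rᵐᵒᵖ v) := by
  refine le_antisymm (fun a ha ↦ ?_) (sup_le ((span_singleton_le_iff_mem _ _).mpr hvu) ?_)
  · have hsplit : a = op a • (1 - v * u) + v * (u * a) := by
      rw [op_smul_eq_mul]; noncomm_ring
    rw [hsplit]
    exact add_mem (mem_sup_left (smul_mem _ _ (mem_span_singleton_self _)))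
      (mem_sup_right (mem_map_of_mem (hu a ha)))
  · rintro _ ⟨b, hb, rfl⟩
    exact hv b hb

end Submodule

/-- If `I`, `J` are right ideals of a ring `R` (submodules of `R` over `Rᵐᵒᵖ`)
with `R/I ≅ R/J` as right `R`-modules, and `J` is generated by `n` elements,
then `I` is generated by at most `n + 1` elements. -/
theorem stmt5 (R : Type*) [Ring R] (I J : Submodule Rᵐᵒᵖ R) (n : ℕ)
    (hiso : Nonempty ((R ⧸ I) ≃ₗ[Rᵐᵒᵖ] (R ⧸ J)))
    (hJ : ∃ f : Fin n → R, J = Submodule.span Rᵐᵒᵖ (Set.range f)) :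
    ∃ g : Fin (n + 1) → R, I = Submodule.span Rᵐᵒᵖ (Set.range g) := by
  obtain ⟨φ⟩ := hiso
  obtain ⟨f, rfl⟩ := hJ
  obtain ⟨u, v, hvu, hu, hv⟩ := Submodule.exists_mul_mem_of_quotient_equiv φ
  refine ⟨Fin.cons (1 - v * u) (v * f ·), ?_⟩
  rw [Submodule.eq_span_one_sub_mul_sup_map_mulLeft hvu hu hv, Submodule.map_span,
    Fin.range_cons, Submodule.span_insert, ← Set.range_comp]
  rfl
end

section
/- Let R be a ring and x ∈ R an element that is not a left zero-divisor. If J and K are right ideals of R with J ⊆ xR, then x⁻¹(J + K) = x⁻¹J + x⁻¹K. -/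
section RightIdeal

variable {R : Type*} [Ring R]

theorem exists_mul_eq_of_mem_span_singleton_op {x a : R}
    (h : a ∈ Submodule.span Rᵐᵒᵖ ({x} : Set R)) : ∃ c : R, x * c = a := by
  obtain ⟨c, rfl⟩ := Submodule.mem_span_singleton.mp h
  exact ⟨c.unop, rfl⟩

/-- If `x * r = x * c + b`, then `r = c + (r - c)` with `x * (r - c) = b`. -/
theorem exists_add_of_mul_mem_sup {x r : R} {J K : Submodule Rᵐᵒᵖ R}
    (hJ : J ≤ Submodule.span Rᵐᵒᵖ ({x} : Set R)) (h : x * r ∈ J ⊔ K) :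
    ∃ j k : R, x * j ∈ J ∧ x * k ∈ K ∧ r = j + k := by
  obtain ⟨a, ha, b, hb, hab⟩ := Submodule.mem_sup.mp h
  obtain ⟨c, rfl⟩ := exists_mul_eq_of_mem_span_singleton_op (hJ ha)
  have hb' : x * (r - c) = b := by rw [mul_sub, ← hab, add_sub_cancel_left]
  exact ⟨c, r - c, ha, hb' ▸ hb, (add_sub_cancel c r).symm⟩

theorem mul_add_mem_sup {x j k : R} {J K : Submodule Rᵐᵒᵖ R} (hj : x * j ∈ J)
    (hk : x * k ∈ K) : x * (j + k) ∈ J ⊔ K :=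
  mul_add x j k ▸ Submodule.add_mem_sup hj hk

end RightIdeal

theorem stmt6_general (R : Type*) [Ring R] (x : R)
    (J K : Submodule Rᵐᵒᵖ R) (hJ : J ≤ Submodule.span Rᵐᵒᵖ ({x} : Set R)) :
    ∀ r : R, x * r ∈ J ⊔ K ↔ ∃ j k : R, x * j ∈ J ∧ x * k ∈ K ∧ r = j + k := by
  intro r
  constructor
  · exact exists_add_of_mul_mem_sup hJ
  · rintro ⟨j, k, hj, hk, rfl⟩
    exact mul_add_mem_sup hj hk

/-- Let `x ∈ R` be no left zero-divisor.  If `J`, `K` are right ideals of `R`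
with `J ⊆ xR`, then `x⁻¹(J + K) = x⁻¹J + x⁻¹K`; membership of `r` in the sum
of the right ideals `x⁻¹J` and `x⁻¹K` is spelled out elementwise. -/
theorem stmt6 (R : Type*) [Ring R] (x : R) (hx : ∀ r : R, x * r = 0 → r = 0)
    (J K : Submodule Rᵐᵒᵖ R) (hJ : J ≤ Submodule.span Rᵐᵒᵖ ({x} : Set R)) :
    ∀ r : R, x * r ∈ J ⊔ K ↔ ∃ j k : R, x * j ∈ J ∧ x * k ∈ K ∧ r = j + k :=
  stmt6_general R x J K hJ
end

section
/- Let R be a ring and x ∈ R not a left zero-divisor. Then for any f, y ∈ R: x⁻¹(xfR + (1+xy)R) = fR + (1+yx)R. -/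
/-!
Everything rests on the identity `x (1 + y x) = (1 + x y) x`, which gives `⊇`. For `⊆`, if
`x r = x f s + (1 + x y) t` then `t = x u` with `u = r - f s - y t`, so
`r = f s + y t + u = f s + (1 + y x) u`.
-/

open Submodule

section

variable {R : Type*} [Ring R]

theorem mem_span_singleton_sup_span_singleton_op {a b r : R} :
    r ∈ span Rᵐᵒᵖ {a} ⊔ span Rᵐᵒᵖ {b} ↔ ∃ s t : R, a * s + b * t = r := by
  rw [← span_insert, mem_span_pair, MulOpposite.op_surjective.exists₂]
  simp only [op_smul_eq_mul]

theorem mul_one_add_mul_comm (x y : R) : x * (1 + y * x) = (1 + x * y) * x := by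
  noncomm_ring

theorem eq_add_one_add_mul_mul_of_mul_eq {x y f r s t : R}
    (h : x * r = x * f * s + (1 + x * y) * t) :
    r = f * s + (1 + y * x) * (r - f * s - y * t) := by
  have ht : x * (r - f * s - y * t) = t := by
    rw [mul_sub, mul_sub, h]; noncomm_ring
  calc r = f * s + y * t + (r - f * s - y * t) := by abel
    _ = f * s + y * (x * (r - f * s - y * t)) + (r - f * s - y * t) := by rw [ht]
    _ = f * s + (1 + y * x) * (r - f * s - y * t) := by noncomm_ring

end

theorem stmt7_general (R : Type*) [Ring R] (x : R)
    (f y : R) :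
    ∀ r : R,
      x * r ∈ Submodule.span Rᵐᵒᵖ ({x * f} : Set R) ⊔
              Submodule.span Rᵐᵒᵖ ({1 + x * y} : Set R) ↔
      r ∈ Submodule.span Rᵐᵒᵖ ({f} : Set R) ⊔
          Submodule.span Rᵐᵒᵖ ({1 + y * x} : Set R) := by
  intro r
  simp only [mem_span_singleton_sup_span_singleton_op]
  constructor
  · rintro ⟨s, t, h⟩
    exact ⟨s, _, (eq_add_one_add_mul_mul_of_mul_eq h.symm).symm⟩
  · rintro ⟨s, u, rfl⟩
    refine ⟨s, x * u, ?_⟩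
    rw [mul_add, ← mul_assoc x (1 + y * x), mul_one_add_mul_comm]
    simp only [mul_assoc]

/-- Let `x ∈ R` be no left zero-divisor.  Then for any `f, y ∈ R`,
`x⁻¹(xfR + (1+xy)R) = fR + (1+yx)R`. -/
theorem stmt7 (R : Type*) [Ring R] (x : R) (hx : ∀ r : R, x * r = 0 → r = 0)
    (f y : R) :
    ∀ r : R,
      x * r ∈ Submodule.span Rᵐᵒᵖ ({x * f} : Set R) ⊔
              Submodule.span Rᵐᵒᵖ ({1 + x * y} : Set R) ↔
      r ∈ Submodule.span Rᵐᵒᵖ ({f} : Set R) ⊔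
          Submodule.span Rᵐᵒᵖ ({1 + y * x} : Set R) :=
  stmt7_general R x f y
end

section
/- In the first Weyl algebra R = A₁(k) = k⟨x,y : xy = yx + 1⟩ over a field k, the right ideal I := x²R + (1+xy)R satisfies: I + xR = R and x⁻¹I = xR; consequently R/I ≅ R/xR as right R-modules. -/
/-- The defining relation of the first Weyl algebra `k⟨x,y⟩/(xy = yx + 1)`,
with `x = ι false` and `y = ι true` in the free algebra on two generators. -/
inductive WeylRel (k : Type*) [Field k] :
    FreeAlgebra k Bool → FreeAlgebra k Bool → Prop
  | rel : WeylRel k (FreeAlgebra.ι k false * FreeAlgebra.ι k true)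
      (FreeAlgebra.ι k true * FreeAlgebra.ι k false + 1)

/-- The first Weyl algebra `A₁(k) = k⟨x,y : xy = yx + 1⟩`. -/
noncomputable abbrev WeylAlgebra (k : Type*) [Field k] := RingQuot (WeylRel k)

/-!
With `I = x²R + (1 + xy)R`: `1 = (1 + xy) - x·y` gives `I + xR = R`. If
`xr = x²a + (1 + xy)b`, then `b = x(r - xa - yb) = xc`, and `(1 + xy)x = x²y` turns the
equation into `x(r - x(a + yc)) = 0`, so `x⁻¹I = xR` as soon as `xu = 0` forces `u ∈ xR`.
For the latter, every `u` is `xa + p(y)`, and in the representation on `k[t][s]` where `x`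
acts as `s` and `y` as `t - ∂/∂s`, `u · 1 = s·(a · 1) + p(t)`; if `xu = 0` then `u · 1 = 0`,
whose `s⁰`-coefficient is `p`, so `u = xa`.
-/

open Polynomial Submodule

section RightIdeal

variable {R : Type*} [Ring R]

theorem range_mulLeft_op (x : R) :
    LinearMap.range (LinearMap.mulLeft Rᵐᵒᵖ x) = span Rᵐᵒᵖ {x} := by
  ext z
  simp only [LinearMap.mem_range, LinearMap.mulLeft_apply, mem_span_singleton,
    MulOpposite.smul_eq_mul_unop]
  exact ⟨fun ⟨r, h⟩ => ⟨MulOpposite.op r, h⟩, fun ⟨a, h⟩ => ⟨a.unop, h⟩⟩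

theorem mul_mem_span_singleton_op (x a : R) : x * a ∈ span Rᵐᵒᵖ {x} :=
  mem_span_singleton.mpr ⟨MulOpposite.op a, rfl⟩

/-- Here `J = x⁻¹I`, and left multiplication by `x` gives `R ⧸ x⁻¹I ≅ (I + xR) ⧸ I = R ⧸ I`. -/
noncomputable def quotEquivOfSupSpanEqTop {I J : Submodule Rᵐᵒᵖ R} {x : R}
    (hsup : I ⊔ span Rᵐᵒᵖ {x} = ⊤) (hJ : ∀ r, x * r ∈ I ↔ r ∈ J) :
    (R ⧸ J) ≃ₗ[Rᵐᵒᵖ] (R ⧸ I) :=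
  let f := I.mkQ ∘ₗ LinearMap.mulLeft Rᵐᵒᵖ x
  have hker : LinearMap.ker f = J := by
    ext r
    simp [f, hJ]
  have hsurj : Function.Surjective f := by
    rw [← LinearMap.range_eq_top, LinearMap.range_comp, range_mulLeft_op, map_mkQ_eq_top, hsup]
  (quotEquivOfEq _ _ hker).symm.trans (f.quotKerEquivOfSurjective hsurj)

theorem span_sq_sup_span_one_add_mul_sup_span_eq_top (x y : R) :
    span Rᵐᵒᵖ {x ^ 2} ⊔ span Rᵐᵒᵖ {1 + x * y} ⊔ span Rᵐᵒᵖ {x} = ⊤ := by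
  set I := span Rᵐᵒᵖ {x ^ 2} ⊔ span Rᵐᵒᵖ {1 + x * y} ⊔ span Rᵐᵒᵖ {x}
  suffices (1 : R) ∈ I from
    eq_top_iff.mpr fun z _ => by simpa using smul_mem I (MulOpposite.op z) this
  have h₁ : 1 + x * y ∈ I := mem_sup_left (mem_sup_right (mem_span_singleton_self _))
  have h₂ : x * y ∈ I := mem_sup_right (mul_mem_span_singleton_op x y)
  simpa using sub_mem h₁ h₂

theorem mul_mem_span_sq_sup_span_one_add_mul_iff {x y : R} (hxy : x * y = y * x + 1)
    (hx : ∀ u, x * u = 0 → u ∈ span Rᵐᵒᵖ {x}) (r : R) :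
    x * r ∈ span Rᵐᵒᵖ {x ^ 2} ⊔ span Rᵐᵒᵖ {1 + x * y} ↔ r ∈ span Rᵐᵒᵖ {x} := by
  constructor
  · intro h
    obtain ⟨_, ha, _, hb, hsum⟩ := mem_sup.mp h
    obtain ⟨a, rfl⟩ := mem_span_singleton.mp ha
    obtain ⟨b, rfl⟩ := mem_span_singleton.mp hb
    simp only [MulOpposite.smul_eq_mul_unop] at hsum
    set c := r - x * a.unop - y * b.unop
    have hbc : b.unop = x * c := by
      simp only [c, mul_sub, ← hsum]
      noncomm_ring
    have hx2 : (1 + x * y) * x = x ^ 2 * y :=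
      calc (1 + x * y) * x = x * (y * x + 1) := by noncomm_ring
        _ = x ^ 2 * y := by rw [← hxy]; noncomm_ring
    have hker : x * (r - x * (a.unop + y * c)) = 0 := by
      rw [mul_sub, ← hsum, hbc, ← mul_assoc, hx2]
      noncomm_ring
    rw [← sub_add_cancel r (x * (a.unop + y * c))]
    exact add_mem (hx _ hker) (mul_mem_span_singleton_op _ _)
  · intro hr
    obtain ⟨a, rfl⟩ := mem_span_singleton.mp hr
    refine mem_sup_left (mem_span_singleton.mpr ⟨a, ?_⟩)
    simp only [MulOpposite.smul_eq_mul_unop, pow_two, mul_assoc]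

end RightIdeal

section Commutator

variable {k A : Type*} [CommRing k] [Ring A] [Algebra k A]

theorem aeval_mul_of_mul_eq_mul_add_one {x y : A} (hxy : x * y = y * x + 1) (p : k[X]) :
    aeval y p * x = x * aeval y p - aeval y (derivative p) := by
  induction p using Polynomial.induction_on with
  | C a => simp [Algebra.commutes]
  | add p q hp hq =>
    simp only [map_add, add_mul, mul_add, hp, hq]
    abel
  | monomial n a ih =>
    have hyx : y * x = x * y - 1 := eq_sub_of_add_eq hxy.symm
    rw [pow_succ, ← mul_assoc]
    generalize C a * X ^ n = q at ih ⊢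
    rw [map_mul, aeval_X, mul_assoc, hyx, derivative_mul, derivative_X, mul_one, map_add,
      map_mul, aeval_X, mul_sub, ← mul_assoc, ih]
    noncomm_ring

end Commutator

namespace WeylAlgebra

variable (k : Type*) [Field k]

noncomputable def x : WeylAlgebra k := RingQuot.mkRingHom (WeylRel k) (FreeAlgebra.ι k false)

noncomputable def y : WeylAlgebra k := RingQuot.mkRingHom (WeylRel k) (FreeAlgebra.ι k true)

theorem x_mul_y : x k * y k = y k * x k + 1 := by
  have h := RingQuot.mkRingHom_rel (WeylRel.rel (k := k))
  simp only [map_mul, map_add, map_one] at h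
  exact h

theorem mkAlgHom_ι_false : RingQuot.mkAlgHom k (WeylRel k) (FreeAlgebra.ι k false) = x k := by
  rw [x, ← RingQuot.mkAlgHom_coe k]
  rfl

theorem mkAlgHom_ι_true : RingQuot.mkAlgHom k (WeylRel k) (FreeAlgebra.ι k true) = y k := by
  rw [y, ← RingQuot.mkAlgHom_coe k]
  rfl

theorem exists_eq_x_mul_add_aeval_y (u : WeylAlgebra k) :
    ∃ a : WeylAlgebra k, ∃ p : k[X], u = x k * a + aeval (y k) p := by
  let S : Submodule k (WeylAlgebra k) :=
    LinearMap.range ((LinearMap.mulLeft k (x k)).coprod (aeval (y k)).toLinearMap)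
  have mem_S {a p} : x k * a + aeval (y k) p ∈ S := ⟨(a, p), rfl⟩
  suffices ∀ r, ∀ v ∈ S, v * r ∈ S by
    obtain ⟨⟨a, p⟩, h⟩ := this u 1 ⟨(0, 1), by simp⟩
    exact ⟨a, p, by simpa using h.symm⟩
  intro r
  obtain ⟨f, rfl⟩ := RingQuot.mkAlgHom_surjective k (WeylRel k) r
  induction f with
  | grade0 c =>
    intro v hv
    rw [AlgHom.commutes, ← Algebra.commutes, ← Algebra.smul_def]
    exact S.smul_mem c hv
  | grade1 b =>
    rintro _ ⟨⟨a, p⟩, rfl⟩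
    change (x k * a + aeval (y k) p) * _ ∈ S
    cases b
    · have h : (x k * a + aeval (y k) p) * x k =
          x k * (a * x k + aeval (y k) p) + aeval (y k) (-derivative p) := by
        rw [add_mul, aeval_mul_of_mul_eq_mul_add_one (x_mul_y k), map_neg]
        noncomm_ring
      simpa only [mkAlgHom_ι_false, h] using mem_S
    · have h : (x k * a + aeval (y k) p) * y k = x k * (a * y k) + aeval (y k) (p * X) := by
        rw [map_mul, aeval_X]
        noncomm_ring
      simpa only [mkAlgHom_ι_true, h] using mem_S
  | mul f g hf hg =>
    intro v hv
    rw [map_mul, ← mul_assoc]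
    exact hg _ (hf v hv)
  | add f g hf hg =>
    intro v hv
    rw [map_add, mul_add]
    exact S.add_mem (hf v hv) (hg v hv)

/-- `k[X][X]` is read as `k[t][s]`, with `s` the outer variable and `t = C X`; `x` acts as `s` and
`y` as `t - ∂/∂s`. -/
noncomputable def polyRep : WeylAlgebra k →ₐ[k] Module.End k k[X][X] :=
  RingQuot.liftAlgHom k ⟨FreeAlgebra.lift k fun b =>
      bif b then LinearMap.mulLeft k (C X) - derivative.restrictScalars k
      else LinearMap.mulLeft k X, by
    rintro _ _ ⟨⟩
    ext f : 1
    simp only [FreeAlgebra.lift_ι_apply, map_mul, map_add, map_one, cond_true, cond_false,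
      Module.End.mul_apply, LinearMap.sub_apply, LinearMap.mulLeft_apply,
      LinearMap.coe_restrictScalars, LinearMap.add_apply, Module.End.one_apply,
      derivative_mul, derivative_X]
    ring⟩

theorem polyRep_x (f : k[X][X]) : polyRep k (x k) f = X * f := by
  rw [← mkAlgHom_ι_false, polyRep, RingQuot.liftAlgHom_mkAlgHom_apply, FreeAlgebra.lift_ι_apply]
  rfl

theorem polyRep_y (f : k[X][X]) : polyRep k (y k) f = C X * f - derivative f := by
  rw [← mkAlgHom_ι_true, polyRep, RingQuot.liftAlgHom_mkAlgHom_apply, FreeAlgebra.lift_ι_apply]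
  rfl

theorem polyRep_aeval_y_C (p q : k[X]) : polyRep k (aeval (y k) p) (C q) = C (p * q) := by
  induction p using Polynomial.induction_on generalizing q with
  | C a => simp [Algebra.algebraMap_eq_smul_one, Polynomial.smul_C, smul_eq_C_mul]
  | add p r hp hr => simp [hp, hr, add_mul]
  | monomial n a ih =>
    rw [pow_succ, ← mul_assoc, map_mul, map_mul, aeval_X, Module.End.mul_apply, polyRep_y,
      derivative_C, sub_zero, ← C_mul, ih]
    congr 1
    ring

theorem mem_span_x_of_x_mul_eq_zero {u : WeylAlgebra k} (hu : x k * u = 0) :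
    u ∈ span (WeylAlgebra k)ᵐᵒᵖ {x k} := by
  obtain ⟨a, p, rfl⟩ := exists_eq_x_mul_add_aeval_y k u
  have hrep : X * polyRep k (x k * a + aeval (y k) p) 1 = 0 := by
    rw [← polyRep_x, ← Module.End.mul_apply, ← map_mul, hu, map_zero, LinearMap.zero_apply]
  have hp : p = 0 := by
    have h0 := congrArg (coeff · 0) (mul_eq_zero.mp hrep |>.resolve_left X_ne_zero)
    rwa [map_add, LinearMap.add_apply, map_mul, Module.End.mul_apply, polyRep_x, ← C_1,
      polyRep_aeval_y_C, mul_one, coeff_add, coeff_X_mul_zero, coeff_C_zero, zero_add,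
      coeff_zero] at h0
  simpa [hp] using mul_mem_span_singleton_op (x k) a

end WeylAlgebra

/-- In the first Weyl algebra `R = A₁(k)`, the right ideal
`I = x²R + (1+xy)R` satisfies `I + xR = R` and `x⁻¹I = xR`; consequently
`R/I ≅ R/xR` as right `R`-modules.  Right ideals are submodules over `Rᵐᵒᵖ`. -/
theorem stmt8 (k : Type*) [Field k] :
    ∀ (x y : WeylAlgebra k),
      x = RingQuot.mkRingHom (WeylRel k) (FreeAlgebra.ι k false) →
      y = RingQuot.mkRingHom (WeylRel k) (FreeAlgebra.ι k true) →
      ∀ I : Submodule (WeylAlgebra k)ᵐᵒᵖ (WeylAlgebra k),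
        I = Submodule.span (WeylAlgebra k)ᵐᵒᵖ ({x ^ 2} : Set (WeylAlgebra k)) ⊔
            Submodule.span (WeylAlgebra k)ᵐᵒᵖ ({1 + x * y} : Set (WeylAlgebra k)) →
        (I ⊔ Submodule.span (WeylAlgebra k)ᵐᵒᵖ ({x} : Set (WeylAlgebra k)) = ⊤) ∧
        (∀ r : WeylAlgebra k, x * r ∈ I ↔
          r ∈ Submodule.span (WeylAlgebra k)ᵐᵒᵖ ({x} : Set (WeylAlgebra k))) ∧
        Nonempty ((WeylAlgebra k ⧸ I) ≃ₗ[(WeylAlgebra k)ᵐᵒᵖ]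
          (WeylAlgebra k ⧸
            Submodule.span (WeylAlgebra k)ᵐᵒᵖ ({x} : Set (WeylAlgebra k)))) := by
  intro x y hx hy I hI
  subst hx hy hI
  have hsup := span_sq_sup_span_one_add_mul_sup_span_eq_top (WeylAlgebra.x k) (WeylAlgebra.y k)
  have hcolon := mul_mem_span_sq_sup_span_one_add_mul_iff (WeylAlgebra.x_mul_y k)
    (fun _ => WeylAlgebra.mem_span_x_of_x_mul_eq_zero k)
  exact ⟨hsup, hcolon, ⟨(quotEquivOfSupSpanEqTop hsup hcolon).symm⟩⟩
end

section
/- Let R be a ring and I a right ideal such that the cyclic right R-module R/I has a finite filtration 0 = M₀ ⊆ M₁ ⊆ ... ⊆ Mₙ = R/I where each factor Mⱼ/Mⱼ₋₁ is isomorphic to R/Iⱼ for a finitely generated right ideal Iⱼ. Then I is finitely generated. -/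
/-!
Finitely presented modules are closed under extensions, so induction along the filtration shows
that `R/I` is finitely presented, each factor `R/Iⱼ` being so because `Iⱼ` is finitely generated.
Since `R` is itself finitely presented, the kernel `I` of `R → R/I` is then finitely generated.
-/

section Extension

variable {S X : Type*} [Ring S] [AddCommGroup X] [Module S X]

theorem Submodule.fg_iff_finitePresentation_quotient [Module.FinitePresentation S X]
    (P : Submodule S X) : P.FG ↔ Module.FinitePresentation S (X ⧸ P) := by
  simpa only [Submodule.ker_mkQ] using Module.FinitePresentation.fg_ker_iff P.mkQ P.mkQ_surjective

theorem Submodule.finitePresentation_of_le_of_quotient {N P : Submodule S X} (hle : N ≤ P)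
    [Module.FinitePresentation S N]
    [Module.FinitePresentation S (P ⧸ N.comap P.subtype)] :
    Module.FinitePresentation S P := by
  have : Module.FinitePresentation S (LinearMap.ker (N.comap P.subtype).mkQ) := by
    rw [Submodule.ker_mkQ]
    exact .of_equiv (Submodule.comapSubtypeEquivOfLe hle).symm
  exact Module.finitePresentation_of_ker (N.comap P.subtype).mkQ (Submodule.mkQ_surjective _)

theorem Submodule.finitePresentation_of_filtration {n : ℕ} (M : Fin (n + 1) → Submodule S X)
    (hmono : Monotone M) (h0 : M 0 = ⊥)
    (hfac : ∀ j : Fin n, Module.FinitePresentation S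
      (M j.succ ⧸ (M j.castSucc).comap (M j.succ).subtype)) (j : Fin (n + 1)) :
    Module.FinitePresentation S (M j) := by
  induction j using Fin.induction with
  | zero =>
    rw [h0]
    infer_instance
  | succ j ih => exact Submodule.finitePresentation_of_le_of_quotient (hmono j.castSucc_le_succ)

end Extension

instance MulOpposite.finitePresentation_self (R : Type*) [Ring R] :
    Module.FinitePresentation Rᵐᵒᵖ R :=
  .of_equiv (MulOpposite.opLinearEquiv Rᵐᵒᵖ).symm

/-- If the cyclic right `R`-module `R/I` has a finite filtration
`⊥ = M₀ ⊆ M₁ ⊆ ⋯ ⊆ Mₙ = ⊤` in which each factor `Mⱼ₊₁/Mⱼ` is isomorphic to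
`R/Iⱼ` for a finitely generated right ideal `Iⱼ`, then the right ideal `I`
is finitely generated.  Right ideals are submodules of `R` over `Rᵐᵒᵖ`. -/
theorem stmt9 (R : Type*) [Ring R] (I : Submodule Rᵐᵒᵖ R) (n : ℕ)
    (M : Fin (n + 1) → Submodule Rᵐᵒᵖ (R ⧸ I)) (hmono : Monotone M)
    (h0 : M 0 = ⊥) (htop : M (Fin.last n) = ⊤)
    (hfac : ∀ j : Fin n, ∃ Ij : Submodule Rᵐᵒᵖ R, Ij.FG ∧
      Nonempty ((↥(M j.succ) ⧸
          Submodule.comap (M j.succ).subtype (M j.castSucc)) ≃ₗ[Rᵐᵒᵖ] (R ⧸ Ij))) :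
    I.FG := by
  have hfactors (j : Fin n) : Module.FinitePresentation Rᵐᵒᵖ
      (M j.succ ⧸ (M j.castSucc).comap (M j.succ).subtype) := by
    obtain ⟨Ij, hIj, ⟨e⟩⟩ := hfac j
    have := (Submodule.fg_iff_finitePresentation_quotient Ij).mp hIj
    exact .of_equiv e.symm
  have hlast := Submodule.finitePresentation_of_filtration M hmono h0 hfactors (Fin.last n)
  rw [htop] at hlast
  exact I.fg_iff_finitePresentation_quotient.mpr (.of_equiv Submodule.topEquiv)
end

section
/- Let R be a ring in which every maximal right ideal is finitely generated. Then every cyclic artinian right R-module has finite length; consequently every finitely generated artinian right R-module has finite length. -/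
universe u

/-!
Let `M` be finitely generated and artinian, and take `N` minimal among the submodules with
`M ⧸ N` of finite length (`N = ⊤` qualifies). A simple module is `A ⧸ m` for a maximal left
ideal `m`, which is finitely generated, so simple modules and hence all modules of finite length
are finitely presented. Thus `N`, the kernel of `M → M ⧸ N`, is finitely generated. If `N ≠ 0`
it has a maximal submodule `N'`, and `M ⧸ N'` is an extension of `M ⧸ N` by the simple module
`N ⧸ N'`, contradicting minimality. Hence `N = 0`.
-/

open Submodule

section

variable {A M : Type*} [Ring A] [AddCommGroup M] [Module A M]

theorem Submodule.FG.exists_covBy {N : Submodule A M} (hN : N.FG) (hbot : N ≠ ⊥) :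
    ∃ N', N' ⋖ N := by
  have : Module.Finite A N := Module.Finite.iff_fg.mpr hN
  have : Nontrivial N := nontrivial_iff_ne_bot.mpr hbot
  obtain ⟨K, hK⟩ := IsCoatomic.exists_coatom (Submodule A N)
  exact ⟨_, (covBy_iff_coatom_Iic (mapIic N K).2).mpr
    ((OrderIso.isCoatom_iff (mapIic N) K).mpr hK)⟩

theorem isFiniteLength_of_submodule_quotient (N : Submodule A M)
    (hN : IsFiniteLength A N) (hQ : IsFiniteLength A (M ⧸ N)) : IsFiniteLength A M := by
  rw [isFiniteLength_iff_isNoetherian_isArtinian] at *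
  obtain ⟨_, _⟩ := hN
  obtain ⟨_, _⟩ := hQ
  exact ⟨(isNoetherian_iff_submodule_quotient N).mpr ⟨‹_›, ‹_›⟩,
    (isArtinian_iff_submodule_quotient N).mpr ⟨‹_›, ‹_›⟩⟩

theorem IsSimpleModule.isFiniteLength [IsSimpleModule A M] : IsFiniteLength A M :=
  have : IsSimpleModule A (M ⧸ (⊥ : Submodule A M)) := .congr (quotEquivOfEqBot ⊥ rfl)
  .of_simple_quotient (N := ⊥) .of_subsingleton

theorem CovBy.isFiniteLength_quotient {N' N : Submodule A M} (h : N' ⋖ N)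
    (hN : IsFiniteLength A (M ⧸ N)) : IsFiniteLength A (M ⧸ N') := by
  let f : N →ₗ[A] M ⧸ N' := N'.mkQ ∘ₗ N.subtype
  have hker : LinearMap.ker f = N'.comap N.subtype := by
    rw [LinearMap.ker_comp, ker_mkQ]
  have hrange : LinearMap.range f = N.map N'.mkQ := by
    rw [LinearMap.range_comp, range_subtype]
  have : IsSimpleModule A (N ⧸ LinearMap.ker f) := hker ▸ (covBy_iff_quot_is_simple h.le).mp h
  refine isFiniteLength_of_submodule_quotient (LinearMap.range f)
    (f.quotKerEquivRange.isFiniteLength IsSimpleModule.isFiniteLength) ?_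
  rw [hrange]
  exact (quotientQuotientEquivQuotient N' N h.le).symm.isFiniteLength hN

theorem IsSimpleModule.finitePresentation_of_forall_isMaximal_fg
    (hmax : ∀ m : Ideal A, m.IsMaximal → m.FG) [IsSimpleModule A M] :
    Module.FinitePresentation A M := by
  obtain ⟨m, hm, ⟨e⟩⟩ := isSimpleModule_iff_quot_maximal.mp ‹IsSimpleModule A M›
  have : Module.FinitePresentation A (A ⧸ m) :=
    Module.finitePresentation_of_surjective m.mkQ m.mkQ_surjective
      (by rw [ker_mkQ]; exact hmax m hm)
  exact .of_equiv e.symm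

theorem IsFiniteLength.finitePresentation_of_forall_isMaximal_fg
    (hmax : ∀ m : Ideal A, m.IsMaximal → m.FG) (h : IsFiniteLength A M) :
    Module.FinitePresentation A M := by
  induction h with
  | of_subsingleton => infer_instance
  | @of_simple_quotient M _ _ N _ _ ih =>
    have : Module.FinitePresentation A (M ⧸ N) :=
      IsSimpleModule.finitePresentation_of_forall_isMaximal_fg hmax
    have : Module.FinitePresentation A (LinearMap.ker N.mkQ) := by rwa [ker_mkQ]
    exact Module.finitePresentation_of_ker N.mkQ N.mkQ_surjective

theorem IsArtinian.isFiniteLength_of_forall_isMaximal_fg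
    (hmax : ∀ m : Ideal A, m.IsMaximal → m.FG) [Module.Finite A M] [IsArtinian A M] :
    IsFiniteLength A M := by
  obtain ⟨N, hN, hmin⟩ := IsArtinian.set_has_minimal
    {N : Submodule A M | IsFiniteLength A (M ⧸ N)} ⟨⊤, .of_subsingleton⟩
  have hfg : N.FG := by
    have := hN.finitePresentation_of_forall_isMaximal_fg hmax
    simpa using Module.FinitePresentation.fg_ker N.mkQ N.mkQ_surjective
  obtain rfl : N = ⊥ := by
    by_contra hbot
    obtain ⟨N', hN'⟩ := hfg.exists_covBy hbot
    exact hmin N' (hN'.isFiniteLength_quotient hN) hN'.lt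
  exact (quotEquivOfEqBot ⊥ rfl).isFiniteLength hN

end

/-- If every maximal right ideal of `R` is finitely generated, then every
cyclic artinian right `R`-module `R/I` has finite length; consequently every
finitely generated artinian right `R`-module has finite length.  Right
`R`-modules are modelled as modules over `Rᵐᵒᵖ`. -/
theorem stmt10 (R : Type u) [Ring R]
    (hmax : ∀ m : Submodule Rᵐᵒᵖ R, IsCoatom m → m.FG) :
    (∀ I : Submodule Rᵐᵒᵖ R, IsArtinian Rᵐᵒᵖ (R ⧸ I) → IsFiniteLength Rᵐᵒᵖ (R ⧸ I)) ∧
    (∀ (M : Type u) [AddCommGroup M] [Module Rᵐᵒᵖ M],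
      Module.Finite Rᵐᵒᵖ M → IsArtinian Rᵐᵒᵖ M → IsFiniteLength Rᵐᵒᵖ M) := by
  -- `op` identifies the right ideals of `R` with the left ideals of `Rᵐᵒᵖ`.
  let e : R ≃ₗ[Rᵐᵒᵖ] Rᵐᵒᵖ := MulOpposite.opLinearEquiv Rᵐᵒᵖ
  have hmax' : ∀ m : Ideal Rᵐᵒᵖ, m.IsMaximal → m.FG := fun m hm =>
    have hcoatom := (OrderIso.isCoatom_iff (orderIsoMapComap e.symm) m).mpr hm.1
    (fg_map_iff _ e.symm.injective).mp (hmax _ hcoatom)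
  have : Module.Finite Rᵐᵒᵖ R := .equiv e.symm
  exact ⟨fun I _ => IsArtinian.isFiniteLength_of_forall_isMaximal_fg hmax',
    fun M _ _ _ _ => IsArtinian.isFiniteLength_of_forall_isMaximal_fg hmax'⟩
end

section
/- Let M be a nonzero semi-artinian right R-module. Then M is monoform if and only if the socle of M is simple and does not embed into any proper factor module M/K with K ≠ 0. -/
/-!
In a semi-artinian module every nonzero submodule `P` contains a simple one: for `Q` maximal with
`Q ∩ P = 0`, the simple submodules of `M ⧸ Q` pull back into `P`.

If `M` is monoform and `K ≠ 0`, no nonzero `S ⊆ M` embeds into `M ⧸ K`: pulling the image back to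
`N ⊆ M` gives a nonzero map `N → S ⊆ M` killing `K`. For two distinct simple submodules `S, T`,
`S` embeds into `M ⧸ T`, so the socle is the unique simple submodule, and it does not embed into
any `M ⧸ K`. Conversely, a nonzero non-injective `f : N → M` has an image containing the socle,
and `f(N) ≅ N ⧸ ker f` embeds into `M ⧸ ker f`.
-/

open Submodule LinearMap Function

section Lattice

variable {α : Type*} [CompleteLattice α] [IsCompactlyGenerated α]

theorem exists_maximal_disjoint (a : α) : ∃ b, Maximal (Disjoint · a) b :=
  zorn_le₀ {b | Disjoint b a} fun c hca hc =>
    ⟨sSup c, hc.directedOn.disjoint_sSup_left.2 hca, fun _ => le_sSup⟩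

/-- For `b` maximal disjoint from `a` and a cover `c` of `b`, we get `b ⋖ b ⊔ (c ⊓ a)`, which
modularity turns into `⊥ = b ⊓ (c ⊓ a) ⋖ c ⊓ a`. -/
theorem exists_isAtom_le_of_forall_exists_covBy [IsModularLattice α]
    (h : ∀ b : α, b ≠ ⊤ → ∃ c, b ⋖ c) {a : α} (ha : a ≠ ⊥) : ∃ x, IsAtom x ∧ x ≤ a := by
  obtain ⟨b, hb⟩ := exists_maximal_disjoint a
  have hb_top : b ≠ ⊤ := by
    rintro rfl
    exact ha (disjoint_top.1 hb.prop.symm)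
  obtain ⟨c, hbc⟩ := h b hb_top
  have hca : c ⊓ a ≠ ⊥ := fun hca => hbc.lt.not_ge (hb.2 (disjoint_iff.2 hca) hbc.le)
  have hb_ca : Disjoint b (c ⊓ a) := hb.prop.mono_right inf_le_right
  have hcover : b ⋖ b ⊔ c ⊓ a := by
    rcases hbc.eq_or_eq (le_sup_left : b ≤ b ⊔ c ⊓ a) (sup_le hbc.le inf_le_left) with hsup | hsup
    · exact absurd (hb_ca.symm.eq_bot_of_le (sup_eq_left.1 hsup)) hca
    · rwa [hsup]
  refine ⟨c ⊓ a, bot_covBy_iff.1 ?_, inf_le_right⟩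
  simpa [disjoint_iff.1 hb_ca] using inf_covBy_of_covBy_sup_left hcover

end Lattice

section Module

variable {R M : Type*} [Ring R] [AddCommGroup M] [Module R M]

theorem Submodule.covBy_comap_mkQ_of_isAtom {N : Submodule R M} {S : Submodule R (M ⧸ N)}
    (hS : IsAtom S) : N ⋖ S.comap N.mkQ :=
  Set.Ici.isAtom_iff.1 (((comapMkQRelIso N).isAtom_iff S).2 hS)

def IsSemiartinian (R M : Type*) [Ring R] [AddCommGroup M] [Module R M] : Prop :=
  ∀ N : Submodule R M, N ≠ ⊤ → ∃ S : Submodule R (M ⧸ N), IsAtom S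

theorem IsSemiartinian.exists_isAtom_le (hM : IsSemiartinian R M) {P : Submodule R M}
    (hP : P ≠ ⊥) : ∃ S, IsAtom S ∧ S ≤ P :=
  exists_isAtom_le_of_forall_exists_covBy
    (fun N hN => (hM N hN).elim fun _ hS => ⟨_, covBy_comap_mkQ_of_isAtom hS⟩) hP

def socle (R M : Type*) [Ring R] [AddCommGroup M] [Module R M] : Submodule R M :=
  sSup {S | IsAtom S}

def IsMonoform (R M : Type*) [Ring R] [AddCommGroup M] [Module R M] : Prop :=
  ∀ N : Submodule R M, N ≠ ⊥ → ∀ f : N →ₗ[R] M, f ≠ 0 → Injective f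

namespace IsMonoform

variable (hM : IsMonoform R M)
include hM

theorem eq_bot_of_injective {K : Submodule R M} (hK : K ≠ ⊥) {S : Submodule R M}
    {f : S →ₗ[R] M ⧸ K} (hf : Injective f) : S = ⊥ := by
  by_contra hS
  set N := (range f).comap K.mkQ
  have hKN : K ≤ N := fun x hx => by simp [N, (Quotient.mk_eq_zero K).2 hx]
  let π : N →ₗ[R] range f := K.mkQ.restrict fun _ hx => hx
  have hπ : Surjective π := by
    rintro ⟨_, y, rfl⟩
    obtain ⟨m, hm⟩ := K.mkQ_surjective (f y)
    exact ⟨⟨m, show K.mkQ m ∈ range f from hm ▸ mem_range_self f y⟩, Subtype.ext hm⟩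
  let g : N →ₗ[R] M := S.subtype ∘ₗ (LinearEquiv.ofInjective f hf).symm.toLinearMap ∘ₗ π
  have hg_range : range g = S := by
    have hsurj : Surjective ((LinearEquiv.ofInjective f hf).symm.toLinearMap ∘ₗ π) :=
      (LinearEquiv.ofInjective f hf).symm.surjective.comp hπ
    rw [range_comp, range_eq_top.2 hsurj, map_subtype_top]
  have hg : Injective g := hM N (ne_bot_of_le_ne_bot hK hKN) g
    (fun h0 => hS (by rw [← hg_range, h0, range_zero]))
  obtain ⟨k, hk, hk0⟩ := (Submodule.ne_bot_iff K).1 hK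
  have hπk : π ⟨k, hKN hk⟩ = 0 := Subtype.ext ((Quotient.mk_eq_zero K).2 hk)
  have hgk : g ⟨k, hKN hk⟩ = 0 := by simp [g, hπk]
  exact hk0 (congrArg Subtype.val (hg (hgk.trans g.map_zero.symm)))

theorem eq_of_isAtom {S T : Submodule R M} (hS : IsAtom S) (hT : IsAtom T) : S = T := by
  by_contra hne
  have hinj : Injective (T.mkQ ∘ₗ S.subtype) := by
    rw [← ker_eq_bot, ker_comp, ker_mkQ, ← disjoint_iff_comap_eq_bot]
    exact hS.disjoint_of_ne hT hne
  exact hS.1 (hM.eq_bot_of_injective hT.1 hinj)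

theorem socle_eq {S : Submodule R M} (hS : IsAtom S) : socle R M = S := by
  have hatoms : {T : Submodule R M | IsAtom T} = {S} :=
    Set.eq_singleton_iff_unique_mem.2 ⟨hS, fun T hT => hM.eq_of_isAtom hT hS⟩
  rw [socle, hatoms, sSup_singleton]

end IsMonoform

theorem Submodule.injective_mapQ_map_subtype (N : Submodule R M) (K : Submodule R N) :
    Injective (K.mapQ (K.map N.subtype) N.subtype (le_comap_map _ _)) := by
  rw [← ker_eq_bot, ker_mapQ, comap_map_eq_of_injective N.injective_subtype, mkQ_map_self]

theorem IsSemiartinian.isMonoform_of_isAtom_socle (hM : IsSemiartinian R M)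
    (hsoc : IsAtom (socle R M))
    (hemb : ∀ K : Submodule R M, K ≠ ⊥ → ∀ f : socle R M →ₗ[R] M ⧸ K, ¬ Injective f) :
    IsMonoform R M := by
  intro N _ f hf
  rw [← ker_eq_bot]
  by_contra hker
  obtain ⟨T, hT, hTf⟩ := hM.exists_isAtom_le (mt range_eq_bot.1 hf)
  have hsoc_le : socle R M ≤ range f :=
    (hsoc.le_iff.1 (le_sSup hT)).resolve_left hT.1 ▸ hTf
  exact hemb ((ker f).map N.subtype)
    (((map_injective_of_injective N.injective_subtype).ne hker).trans_eq (Submodule.map_bot _))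
    ((ker f).mapQ _ N.subtype (le_comap_map _ _) ∘ₗ f.quotKerEquivRange.symm.toLinearMap ∘ₗ
      inclusion hsoc_le)
    ((injective_mapQ_map_subtype N _).comp
      (f.quotKerEquivRange.symm.injective.comp (inclusion_injective hsoc_le)))

end Module

/-- A nonzero semi-artinian right `R`-module `M` (every nonzero factor of `M`
has a simple submodule) is monoform iff its socle (the sum of all simple,
i.e. atomic, submodules) is simple and does not embed into any proper factor
module `M/K` with `K ≠ 0`.  Right modules are modelled over `Rᵐᵒᵖ`. -/
theorem stmt12 (R : Type*) [Ring R] (M : Type*) [AddCommGroup M] [Module Rᵐᵒᵖ M]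
    (hM : Nontrivial M)
    (hsa : ∀ N : Submodule Rᵐᵒᵖ M, N ≠ ⊤ →
      ∃ S : Submodule Rᵐᵒᵖ (M ⧸ N), IsAtom S) :
    (∀ N : Submodule Rᵐᵒᵖ M, N ≠ ⊥ →
        ∀ f : ↥N →ₗ[Rᵐᵒᵖ] M, f ≠ 0 → Function.Injective f) ↔
      (IsSimpleModule Rᵐᵒᵖ ↥(sSup {S : Submodule Rᵐᵒᵖ M | IsAtom S}) ∧
        ∀ K : Submodule Rᵐᵒᵖ M, K ≠ ⊥ →
          ∀ f : ↥(sSup {S : Submodule Rᵐᵒᵖ M | IsAtom S}) →ₗ[Rᵐᵒᵖ] (M ⧸ K),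
            ¬ Function.Injective f) := by
  have hsa : IsSemiartinian Rᵐᵒᵖ M := hsa
  rw [isSimpleModule_iff_isAtom]
  refine ⟨fun hmono => ?_, fun ⟨hsoc, hemb⟩ => hsa.isMonoform_of_isAtom_socle hsoc hemb⟩
  obtain ⟨S, hS, -⟩ := hsa.exists_isAtom_le top_ne_bot
  have hsoc : socle Rᵐᵒᵖ M = S := IsMonoform.socle_eq hmono hS
  exact ⟨(hsoc.symm ▸ hS : IsAtom (socle Rᵐᵒᵖ M)),
    fun K hK f hf => hS.1 (hsoc.symm.trans (IsMonoform.eq_bot_of_injective hmono hK hf))⟩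
end

section
/- Let R be a ring and suppose the right R-module R_R is cancellable in the category of finitely generated right R-modules (R ⊕ A ≅ R ⊕ B implies A ≅ B for f.g. modules A, B). If I and J are right ideals with R/I ≅ R/J and J principal, then I is principal. In particular, the family of principal right ideals is closed under similarity. -/
/-!
Schanuel's lemma for the two projective presentations `R → R/I` and `R → R/J ≅ R/I` gives
`R ⊕ I ≅ R ⊕ J`. Since `J` is finitely generated, so is `I`, and cancelling `R` yields `I ≅ J`;
a module isomorphic to a cyclic one is cyclic.

Schanuel's lemma itself: the fibre product of surjections `φ : P → M ← Q : ψ` is an extension of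
`P` by `ker ψ` and of `Q` by `ker φ`, and both extensions split because `P` and `Q` are projective.
-/

universe u

open LinearMap

instance MulOpposite.free_op_self (R : Type*) [Ring R] : Module.Free Rᵐᵒᵖ R :=
  .of_equiv (MulOpposite.opLinearEquiv Rᵐᵒᵖ : R ≃ₗ[Rᵐᵒᵖ] Rᵐᵒᵖ).symm

instance MulOpposite.finite_op_self (R : Type*) [Ring R] : Module.Finite Rᵐᵒᵖ R :=
  .equiv (MulOpposite.opLinearEquiv Rᵐᵒᵖ : R ≃ₗ[Rᵐᵒᵖ] Rᵐᵒᵖ).symm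

theorem Module.Finite.of_prod_linearEquiv_prod {S P A B : Type*} [Ring S] [AddCommGroup P]
    [Module S P] [AddCommGroup A] [Module S A] [AddCommGroup B] [Module S B]
    [Module.Finite S P] [Module.Finite S B] (e : (P × A) ≃ₗ[S] (P × B)) : Module.Finite S A :=
  have : Module.Finite S (P × A) := .equiv e.symm
  .of_surjective (snd S P A) Prod.snd_surjective

namespace LinearMap

variable {S P Q M : Type*} [Ring S] [AddCommGroup P] [Module S P] [AddCommGroup Q] [Module S Q]
  [AddCommGroup M] [Module S M] (φ : P →ₗ[S] M) (ψ : Q →ₗ[S] M)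

def pullback : Submodule S (P × Q) :=
  eqLocus (φ ∘ₗ fst S P Q) (ψ ∘ₗ snd S P Q)

theorem mem_pullback {x : P × Q} : x ∈ pullback φ ψ ↔ φ x.1 = ψ x.2 := mem_eqLocus

def pullbackFst : pullback φ ψ →ₗ[S] P := fst S P Q ∘ₗ (pullback φ ψ).subtype

def kerToPullback : ker ψ →ₗ[S] pullback φ ψ :=
  codRestrict _ (inr S P Q ∘ₗ (ker ψ).subtype) fun q ↦ by
    simp [mem_pullback, mem_ker.mp q.2]

theorem exact_kerToPullback_pullbackFst :
    Function.Exact (kerToPullback φ ψ) (pullbackFst φ ψ) := by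
  intro x
  constructor
  · obtain ⟨⟨p, q⟩, hpq⟩ := x
    rintro (rfl : p = 0)
    exact ⟨⟨q, by simpa [mem_pullback, eq_comm] using hpq⟩, rfl⟩
  · rintro ⟨q, rfl⟩
    rfl

theorem pullbackFst_surjective (hψ : Function.Surjective ψ) :
    Function.Surjective (pullbackFst φ ψ) := fun p ↦
  have ⟨q, hq⟩ := hψ (φ p)
  ⟨⟨(p, q), (mem_pullback φ ψ).2 hq.symm⟩, rfl⟩

def pullbackComm : pullback φ ψ ≃ₗ[S] pullback ψ φ :=
  (LinearEquiv.prodComm S P Q).submoduleMap (pullback φ ψ) ≪≫ₗ LinearEquiv.ofEq _ _ (by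
    ext ⟨q, p⟩; simp [mem_pullback, eq_comm])

theorem nonempty_pullback_equiv_prod_ker [Module.Projective S P] (hψ : Function.Surjective ψ) :
    Nonempty (pullback φ ψ ≃ₗ[S] P × ker ψ) := by
  obtain ⟨l, hl⟩ := Module.projective_lifting_property (pullbackFst φ ψ) .id
    (pullbackFst_surjective φ ψ hψ)
  have hinj : Function.Injective (kerToPullback φ ψ) := fun a b h ↦
    Subtype.ext (congrArg (fun x : pullback φ ψ ↦ x.1.2) h)
  exact ⟨((exact_kerToPullback_pullbackFst φ ψ).splitSurjectiveEquiv hinj ⟨l, hl⟩).1 ≪≫ₗ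
    LinearEquiv.prodComm S _ _⟩

theorem schanuel [Module.Projective S P] [Module.Projective S Q]
    (hφ : Function.Surjective φ) (hψ : Function.Surjective ψ) :
    Nonempty ((P × ker ψ) ≃ₗ[S] (Q × ker φ)) := by
  obtain ⟨e⟩ := nonempty_pullback_equiv_prod_ker φ ψ hψ
  obtain ⟨f⟩ := nonempty_pullback_equiv_prod_ker ψ φ hφ
  exact ⟨e.symm ≪≫ₗ pullbackComm φ ψ ≪≫ₗ f⟩

end LinearMap

theorem Submodule.nonempty_prod_equiv_of_quotient_equiv {S P : Type*} [Ring S] [AddCommGroup P]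
    [Module S P] [Module.Projective S P] {I J : Submodule S P} (e : (P ⧸ I) ≃ₗ[S] (P ⧸ J)) :
    Nonempty ((P × I) ≃ₗ[S] (P × J)) := by
  have hI : ker (e.toLinearMap ∘ₗ I.mkQ) = I := by rw [LinearEquiv.ker_comp, ker_mkQ]
  obtain ⟨f⟩ := schanuel (e.toLinearMap ∘ₗ I.mkQ) J.mkQ
    (e.surjective.comp I.mkQ_surjective) J.mkQ_surjective
  exact ⟨(f ≪≫ₗ (LinearEquiv.refl S P).prodCongr (.ofEq _ _ hI)).symm ≪≫ₗ
    (LinearEquiv.refl S P).prodCongr (.ofEq _ _ J.ker_mkQ)⟩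

/-- Suppose the right `R`-module `R` is cancellable in the category of
finitely generated right `R`-modules: `R ⊕ A ≅ R ⊕ B` implies `A ≅ B` for
finitely generated `A`, `B`.  If `I`, `J` are right ideals with `R/I ≅ R/J`
and `J` principal, then `I` is principal.  (In particular, the family of
principal right ideals is closed under similarity.)  Right modules are
modelled over `Rᵐᵒᵖ`. -/
theorem stmt17 (R : Type u) [Ring R]
    (hcancel : ∀ (A B : Type u) [AddCommGroup A] [Module Rᵐᵒᵖ A]
      [AddCommGroup B] [Module Rᵐᵒᵖ B], Module.Finite Rᵐᵒᵖ A →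
      Module.Finite Rᵐᵒᵖ B →
      Nonempty ((R × A) ≃ₗ[Rᵐᵒᵖ] (R × B)) → Nonempty (A ≃ₗ[Rᵐᵒᵖ] B))
    (I J : Submodule Rᵐᵒᵖ R)
    (hiso : Nonempty ((R ⧸ I) ≃ₗ[Rᵐᵒᵖ] (R ⧸ J)))
    (hJ : ∃ x : R, J = Submodule.span Rᵐᵒᵖ ({x} : Set R)) :
    ∃ y : R, I = Submodule.span Rᵐᵒᵖ ({y} : Set R) := by
  obtain ⟨e⟩ := hiso
  have hJprin : J.IsPrincipal := ⟨hJ⟩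
  have hJfin : Module.Finite Rᵐᵒᵖ J := Module.Finite.iff_fg.2 hJprin.fg
  obtain ⟨f⟩ := Submodule.nonempty_prod_equiv_of_quotient_equiv e
  have hIfin : Module.Finite Rᵐᵒᵖ I := .of_prod_linearEquiv_prod f
  obtain ⟨g⟩ := hcancel I J hIfin hJfin ⟨f⟩
  rw [← Submodule.isPrincipal_iff, ← Module.isPrincipal_submodule_iff, g.isPrincipal_iff,
    Module.isPrincipal_submodule_iff]
  exact hJprin
end

section
/- Let R be a ring and define P ⊆ R to be a Michler-prime right ideal if P is a proper right ideal and aRb ⊆ P implies a ∈ P or b ∈ P. Then a proper right ideal P is Michler-prime if and only if R/P is a prime module, i.e., every nonzero submodule of R/P has the same annihilator as R/P. -/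
/-!
An element `b` annihilates the cyclic submodule of `R/P` generated by `a + P` exactly when
`aRb ⊆ P`, and annihilates all of `R/P` exactly when `Rb ⊆ P`. If `s` kills a nonzero
`a + P`, then `aR(xs) ⊆ P` for every `x`, so the Michler condition gives `Rs ⊆ P`. Conversely,
if `aRb ⊆ P` with `a ∉ P`, then `b` kills the nonzero submodule generated by `a + P`, hence kills
`1 + P`, i.e. `b ∈ P`.
-/

open Submodule MulOpposite

namespace Submodule.Quotient

variable {R : Type*} [Ring R] {P : Submodule Rᵐᵒᵖ R}

theorem smul_mk_eq_mk_mul (s : Rᵐᵒᵖ) (x : R) : s • (mk x : R ⧸ P) = mk (x * s.unop) :=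
  (mk_smul P s x).symm

theorem smul_mk_eq_zero_iff (s : Rᵐᵒᵖ) (x : R) : s • (mk x : R ⧸ P) = 0 ↔ x * s.unop ∈ P := by
  rw [smul_mk_eq_mk_mul, Quotient.mk_eq_zero]

theorem forall_smul_eq_zero_iff (s : Rᵐᵒᵖ) :
    (∀ m : R ⧸ P, s • m = 0) ↔ ∀ x : R, x * s.unop ∈ P :=
  mk_surjective P |>.forall.trans <| forall_congr' fun x => smul_mk_eq_zero_iff s x

theorem forall_mem_span_mk_smul_eq_zero_iff (a : R) (s : Rᵐᵒᵖ) :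
    (∀ n ∈ span Rᵐᵒᵖ {(mk a : R ⧸ P)}, s • n = 0) ↔ ∀ r : R, a * r * s.unop ∈ P := by
  simp only [mem_span_singleton, forall_exists_index, forall_apply_eq_imp_iff,
    smul_mk_eq_mk_mul, Quotient.mk_eq_zero]
  exact ⟨fun h r => h (op r), fun h r => h r.unop⟩

end Submodule.Quotient

open Submodule.Quotient

theorem stmt19_general (R : Type*) [Ring R] (P : Submodule Rᵐᵒᵖ R) :
    (∀ a b : R, (∀ r : R, a * r * b ∈ P) → a ∈ P ∨ b ∈ P) ↔
      (∀ N : Submodule Rᵐᵒᵖ (R ⧸ P), N ≠ ⊥ →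
        ∀ s : Rᵐᵒᵖ, ((∀ n ∈ N, s • n = 0) ↔ (∀ m : R ⧸ P, s • m = 0))) := by
  constructor
  · intro hMichler N hN s
    refine ⟨fun hs => ?_, fun hs n _ => hs n⟩
    obtain ⟨n, hnN, hn⟩ := (Submodule.ne_bot_iff N).mp hN
    obtain ⟨a, rfl⟩ := mk_surjective P n
    have hspan := (forall_mem_span_mk_smul_eq_zero_iff a s).mp
      fun m hm => hs m ((span_singleton_le_iff_mem _ N).mpr hnN hm)
    refine (forall_smul_eq_zero_iff s).mpr fun x => ?_
    refine (hMichler a _ fun r => ?_).resolve_left fun h => hn ((Quotient.mk_eq_zero P).mpr h)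
    simpa only [mul_assoc] using hspan (r * x)
  · intro hPrime a b hab
    refine or_iff_not_imp_left.mpr fun ha => ?_
    have hN : span Rᵐᵒᵖ {(mk a : R ⧸ P)} ≠ ⊥ := by
      rwa [ne_eq, span_singleton_eq_bot, Quotient.mk_eq_zero]
    simpa only [unop_op, one_mul] using (forall_smul_eq_zero_iff (op b)).mp
      ((hPrime _ hN (op b)).mp ((forall_mem_span_mk_smul_eq_zero_iff a (op b)).mpr hab)) 1

/-- A proper right ideal `P` of `R` is Michler-prime (`aRb ⊆ P` implies
`a ∈ P` or `b ∈ P`) iff `R/P` is a prime module, i.e. every nonzero submodule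
of `R/P` has the same annihilator as `R/P`.  Right ideals are
`Rᵐᵒᵖ`-submodules of `R` and `R/P` is a right `R`-module, i.e. an
`Rᵐᵒᵖ`-module. -/
theorem stmt19 (R : Type*) [Ring R] (P : Submodule Rᵐᵒᵖ R) (hP : P ≠ ⊤) :
    (∀ a b : R, (∀ r : R, a * r * b ∈ P) → a ∈ P ∨ b ∈ P) ↔
      (∀ N : Submodule Rᵐᵒᵖ (R ⧸ P), N ≠ ⊥ →
        ∀ s : Rᵐᵒᵖ, ((∀ n ∈ N, s • n = 0) ↔ (∀ m : R ⧸ P, s • m = 0))) :=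
  stmt19_general R P
end
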